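/- Let m ≥ 1 and k ≥ 4 be integers and let q ∈ (1,2) satisfy |q − q_k| < q_k^{−(m+2)k−3}. With L_i(q), R_i(q) (0 ≤ i ≤ m), L_Q(q), R_Q(q) as below, let B(q) = ⋂_{i=0}^m [L_i(q), R_i(q)] ∩ [L_Q(q), R_Q(q)], let D_q = q^{−(m+1)k+2} π_q((1^{k−1}0)^∞) be the common length of these intervals, and set β_q = min{1/4, |B(q)|/D_q}, where |B(q)| is the length of the interval B(q). Then β_q > 1/8. -/

import Mathlib

open Set

/-- Projection map: the value of the (0-indexed) digit sequence `a` in base `q`,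
`π_q(a) = Σ_{j=0}^∞ a_j q^{-(j+1)}`. -/
noncomputable def piQ (q : ℝ) (a : ℕ → ℝ) : ℝ := ∑' j : ℕ, a j / q ^ (j + 1)

/-- `a` is a sequence of digits in `{0,1}`. -/
def IsDigitSeq (a : ℕ → ℝ) : Prop := ∀ j, a j = 0 ∨ a j = 1

/-- `a` is a sequence of digits in `{-1,0,1}`. -/
def IsExtDigitSeq (a : ℕ → ℝ) : Prop := ∀ j, a j = -1 ∨ a j = 0 ∨ a j = 1

/-- The set of base-`q` expansions of `x`. -/
def SigmaSet (q x : ℝ) : Set (ℕ → ℝ) := {a | IsDigitSeq a ∧ piQ q a = x}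

/-- The interval `I_q = [0, 1/(q-1)]`. -/
def Iq (q : ℝ) : Set ℝ := Set.Icc 0 (1 / (q - 1))

/-- The switch region `J_q = [1/q, 1/(q(q-1))]`. -/
def Jq (q : ℝ) : Set ℝ := Set.Icc (1 / q) (1 / (q * (q - 1)))

/-- The set of points of `I_q` having exactly `m` base-`q` expansions. -/
def UqM (q : ℝ) (m : ℕ∞) : Set ℝ := {x | x ∈ Iq q ∧ (SigmaSet q x).encard = m}

/-- The set of points of `I_q` having a unique base-`q` expansion. -/
def Uq (q : ℝ) : Set ℝ := UqM q 1

/-- `B_m`: the set of bases `q ∈ (1,2)` for which some point has exactly `m` expansions. -/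
def Bset (m : ℕ∞) : Set ℝ := {q | q ∈ Set.Ioo (1 : ℝ) 2 ∧ (UqM q m).Nonempty}

/-- `x` is the `k`-Bonacci number: the root in `(1,2)` of `x^k = x^{k-1} + ⋯ + x + 1`. -/
def IsBonacci (k : ℕ) (x : ℝ) : Prop :=
  x ∈ Set.Ioo (1 : ℝ) 2 ∧ x ^ k = ∑ i ∈ Finset.range k, x ^ i

/-- `a` contains no occurrence of the word `01^k` as a consecutive block. -/
def AvoidsWord01 (k : ℕ) (a : ℕ → ℝ) : Prop :=
  ∀ i, ¬(a i = 0 ∧ ∀ j, 1 ≤ j → j ≤ k → a (i + j) = 1)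

/-- `a` contains no occurrence of the word `10^k` as a consecutive block. -/
def AvoidsWord10 (k : ℕ) (a : ℕ → ℝ) : Prop :=
  ∀ i, ¬(a i = 1 ∧ ∀ j, 1 ≤ j → j ≤ k → a (i + j) = 0)

/-- `S_k`: the set of `{0,1}`-sequences avoiding the words `01^k` and `10^k`. -/
def Sset (k : ℕ) : Set (ℕ → ℝ) := {a | IsDigitSeq a ∧ AvoidsWord01 k a ∧ AvoidsWord10 k a}

/-- `g_{q,k} = f_1^{-(k-1)} ∘ f_0^{-1}`, where `f_0^{-1}(y) = y/q` and `f_1^{-1}(y) = (y+1)/q`. -/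
noncomputable def gMap (q : ℝ) (k : ℕ) (x : ℝ) : ℝ := (fun y => (y + 1) / q)^[k - 1] (x / q)

/-- The maps `f_0(x) = qx` (for `b = false`) and `f_1(x) = qx - 1` (for `b = true`). -/
noncomputable def fDigit (q : ℝ) (b : Bool) (x : ℝ) : ℝ := if b then q * x - 1 else q * x

/-- `(a, b)` is a bounded gap of `C`: a bounded connected component of `ℝ \ C`. -/
def IsGap (C : Set ℝ) (a b : ℝ) : Prop :=
  a < b ∧ a ∈ C ∧ b ∈ C ∧ Set.Ioo a b ∩ C = ∅

/-- The left endpoint of the bridge of `C` lying immediately to the left of the gap `(a, b)`: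
the right endpoint of the nearest gap to the left having diameter at least `b - a`
(or `min C` if there is no such gap). -/
noncomputable def leftBridgeStart (C : Set ℝ) (a b : ℝ) : ℝ :=
  sSup ({sInf C} ∪ {d | ∃ c, IsGap C c d ∧ d ≤ a ∧ b - a ≤ d - c})

/-- The right endpoint of the bridge of `C` lying immediately to the right of the gap `(a, b)`. -/
noncomputable def rightBridgeEnd (C : Set ℝ) (a b : ℝ) : ℝ :=
  sInf ({sSup C} ∪ {c | ∃ d, IsGap C c d ∧ b ≤ c ∧ b - a ≤ d - c})

/-- The (Newhouse) thickness of a compact set `C ⊆ ℝ`: the infimum over all bounded gaps `G`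
of the ratio of the length of the bridge on either side of `G` to the length of `G`
(`∞` if `C` has no bounded gap). -/
noncomputable def thickness (C : Set ℝ) : ENNReal :=
  ⨅ p : {p : ℝ × ℝ // IsGap C p.1 p.2},
    ENNReal.ofReal
      (min ((p.1.1 - leftBridgeStart C p.1.1 p.1.2) / (p.1.2 - p.1.1))
        ((rightBridgeEnd C p.1.1 p.1.2 - p.1.2) / (p.1.2 - p.1.1)))

/-- `B` is contained in a gap of `A`, i.e. in a connected component of `ℝ \ A`. -/
def ContainedInGap (B A : Set ℝ) : Prop :=
  ∃ x ∈ Aᶜ, B ⊆ connectedComponentIn Aᶜ x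

/-- Two sets are interleaved if neither is contained in a gap of the other. -/
def Interleaved (A B : Set ℝ) : Prop :=
  ¬ContainedInGap B A ∧ ¬ContainedInGap A B

/-- `A` and `B` are `ε`-strongly interleaved: any compact sets within Hausdorff distance `ε`
of `A` and `B` respectively are interleaved. -/
def StronglyInterleaved (ε : ℝ) (A B : Set ℝ) : Prop :=
  ∀ A' B' : Set ℝ, IsCompact A' → IsCompact B' →
    EMetric.hausdorffEdist A A' ≤ ENNReal.ofReal ε →
    EMetric.hausdorffEdist B B' ≤ ENNReal.ofReal ε → Interleaved A' B'

/-- The sequence `0^{k-3}(01^{k-1})^∞` (0-indexed). -/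
noncomputable def seqG (k : ℕ) : ℕ → ℝ := fun j =>
  if j < k - 3 then 0 else if (j - (k - 3)) % k = 0 then 0 else 1

/-- The sequence `1^{k-3}(10^{k-1})^∞` (0-indexed). -/
noncomputable def seqH (k : ℕ) : ℕ → ℝ := fun j =>
  if j < k - 3 then 1 else if (j - (k - 3)) % k = 0 then 1 else 0

/-- The sequence `(1^{k-1}0)^∞` (0-indexed). -/
noncomputable def seqP (k : ℕ) : ℕ → ℝ := fun j => if j % k = k - 1 then 0 else 1

/-!
The map `g = g_{q,k}` is affine, `g x = x / q^k + π_q(1^{k-1}0^∞)`, with fixed point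
`P = π_q((1^{k-1}0)^∞)`; hence `g^i (x + y) = g^i x + y / q^{ik}`, every `L_i = g^i 1` lies within
`|1 - P|` of `1`, `R_i = L_i + D_q` and `L_Q = R_Q - D_q`, where
`D_q = q^{-mk} π_q(0^{k-3}(01^{k-1})^∞) ≈ 4 q^{-(m+1)k}` and
`R_Q = g^m 1 + (1/(q-1) - 1) q^{-mk} ≈ 1 + q^{-(m+1)k}`.
Since `(1 - P)(1 - q^{-k}) = π_{q_k}(1^k 0^∞) - π_q(1^k 0^∞)`, the closeness of `q` to `q_k`
makes `|1 - P| = O(|q - q_k|)` negligible against `q^{-(m+1)k}`, so `B(q)` contains an interval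
of length about `q^{-(m+1)k} ≈ D_q / 4`.
-/

lemma one_sub_mul_mul_pow_le_pow {a b : ℝ} (ha : 0 ≤ a) (hb : 1 ≤ b) (n : ℕ) :
    (1 - n * |a - b|) * a ^ n ≤ b ^ n := by
  set δ := |a - b|
  have hexp : a ≤ b * Real.exp δ := by
    have := Real.add_one_le_exp δ
    have : a - b ≤ δ := le_abs_self _
    nlinarith [abs_nonneg (a - b)]
  calc (1 - n * δ) * a ^ n ≤ Real.exp (-(n * δ)) * (b * Real.exp δ) ^ n := by
        refine mul_le_mul ?_ (pow_le_pow_left₀ ha hexp n) (pow_nonneg ha n) (Real.exp_pos _).le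
        linarith [Real.add_one_le_exp (-(n * δ))]
    _ = b ^ n := by
        rw [mul_pow, ← Real.exp_nat_mul, mul_left_comm, ← Real.exp_add, neg_add_cancel,
          Real.exp_zero, mul_one]

lemma sum_range_succ_mul_pow_le {r : ℝ} (h0 : 0 ≤ r) (h1 : r < 1) (n : ℕ) :
    ∑ j ∈ Finset.range n, ((j : ℝ) + 1) * r ^ j ≤ 1 / (1 - r) ^ 2 := by
  have hs := hasSum_choose_mul_geometric_of_norm_lt_one 1 (r := r)
    (by rwa [Real.norm_eq_abs, abs_of_nonneg h0])
  simp only [Nat.choose_one_right, Nat.cast_add, Nat.cast_one] at hs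
  exact sum_le_hasSum _ (fun j _ => by positivity) hs

lemma sub_le_volume_toReal_of_Icc_subset {S : Set ℝ} {a b c d : ℝ} (hab : Icc a b ⊆ S)
    (hcd : S ⊆ Icc c d) : b - a ≤ (MeasureTheory.volume S).toReal := by
  have hfin : MeasureTheory.volume S ≠ ⊤ :=
    ne_top_of_le_ne_top (by simp [Real.volume_Icc]) (MeasureTheory.measure_mono hcd)
  have h := ENNReal.toReal_mono hfin (MeasureTheory.measure_mono hab)
  rw [Real.volume_Icc, ENNReal.toReal_ofReal'] at h
  exact (le_max_left _ _).trans h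

section piQ

variable {q : ℝ} {a b : ℕ → ℝ}

lemma IsDigitSeq.summable_piQ (ha : IsDigitSeq a) (hq : 1 < q) :
    Summable fun j => a j / q ^ (j + 1) := by
  have hq0 : 0 < q := by linarith
  refine Summable.of_nonneg_of_le (fun j => ?_) (fun j => ?_)
    (summable_geometric_of_lt_one (inv_nonneg.2 hq0.le) (inv_lt_one_of_one_lt₀ hq))
  · rcases ha j with h | h <;> rw [h] <;> positivity
  · rw [inv_pow, ← one_div]
    have hle : q ^ j ≤ q ^ (j + 1) := pow_le_pow_right₀ hq.le j.le_succ
    rcases ha j with h | h <;> rw [h]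
    · rw [zero_div]; positivity
    · exact one_div_le_one_div_of_le (by positivity) hle

lemma piQ_add (ha : IsDigitSeq a) (hb : IsDigitSeq b) (hq : 1 < q) :
    piQ q a + piQ q b = piQ q (fun j => a j + b j) := by
  simp only [piQ, add_div]
  exact ((ha.summable_piQ hq).tsum_add (hb.summable_piQ hq)).symm

lemma piQ_one (hq : 1 < q) : piQ q (fun _ => 1) = 1 / (q - 1) := by
  have hq0 : 0 < q := by linarith
  have hterm : ∀ j : ℕ, (1 : ℝ) / q ^ (j + 1) = q⁻¹ * q⁻¹ ^ j := fun j => by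
    rw [← pow_succ', inv_pow, one_div]
  rw [piQ, tsum_congr hterm, tsum_mul_left,
    tsum_geometric_of_lt_one (inv_nonneg.2 hq0.le) (inv_lt_one_of_one_lt₀ hq)]
  field_simp [(by linarith : q - 1 ≠ 0)]

lemma piQ_eq_sum_add_piQ_shift (ha : IsDigitSeq a) (hq : 1 < q) (n : ℕ) :
    piQ q a = ∑ j ∈ Finset.range n, a j / q ^ (j + 1) + piQ q (fun j => a (j + n)) / q ^ n := by
  rw [piQ, ← (ha.summable_piQ hq).sum_add_tsum_nat_add n, piQ, ← tsum_div_const]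
  congr 2 with j
  rw [div_div, ← pow_add, add_right_comm]

end piQ

/-- `π_q(1^n 0^∞)`. -/
noncomputable def piQOnes (q : ℝ) (n : ℕ) : ℝ := ∑ j ∈ Finset.range n, 1 / q ^ (j + 1)

section piQOnes

variable {q : ℝ}

lemma piQOnes_succ (n : ℕ) : piQOnes q (n + 1) = (1 + piQOnes q n) / q := by
  rw [piQOnes, Finset.sum_range_succ', piQOnes, add_div, Finset.sum_div, zero_add, pow_one,
    add_comm]
  simp only [div_div, ← pow_succ]

lemma piQOnes_sub_one {k : ℕ} (hk : 1 ≤ k) :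
    piQOnes q k = piQOnes q (k - 1) + 1 / q ^ k := by
  obtain ⟨n, rfl⟩ : ∃ n, k = n + 1 := ⟨k - 1, by omega⟩
  rw [piQOnes, Finset.sum_range_succ, Nat.add_sub_cancel, piQOnes]

lemma abs_piQOnes_sub_le {c x y : ℝ} (hc : 1 < c) (hx : c ≤ x) (hy : c ≤ y) (n : ℕ) :
    |piQOnes x n - piQOnes y n| ≤ |x - y| / (c - 1) ^ 2 := by
  have hc0 : 0 < c := by linarith
  have hx0 : 0 < x := by linarith
  have hy0 : 0 < y := by linarith
  have hinv : |x⁻¹ - y⁻¹| ≤ |x - y| / c ^ 2 := by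
    rw [inv_sub_inv hx0.ne' hy0.ne', abs_div, abs_sub_comm, abs_of_pos (mul_pos hx0 hy0)]
    gcongr
    nlinarith
  have hmax : max |x⁻¹| |y⁻¹| ≤ c⁻¹ := by
    rw [abs_of_pos (inv_pos.2 hx0), abs_of_pos (inv_pos.2 hy0)]
    exact max_le (inv_anti₀ hc0 hx) (inv_anti₀ hc0 hy)
  have hterm : ∀ j ∈ Finset.range n,
      |1 / x ^ (j + 1) - 1 / y ^ (j + 1)| ≤ |x⁻¹ - y⁻¹| * ((j + 1) * c⁻¹ ^ j) := fun j _ => by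
    rw [one_div, one_div, ← inv_pow, ← inv_pow]
    calc _ ≤ |x⁻¹ - y⁻¹| * (j + 1 : ℕ) * max |x⁻¹| |y⁻¹| ^ j := abs_pow_sub_pow_le _ _ _
      _ ≤ _ := by push_cast; rw [mul_assoc]; gcongr
  calc |piQOnes x n - piQOnes y n|
      = |∑ j ∈ Finset.range n, (1 / x ^ (j + 1) - 1 / y ^ (j + 1))| := by
        rw [piQOnes, piQOnes, Finset.sum_sub_distrib]
    _ ≤ ∑ j ∈ Finset.range n, |x⁻¹ - y⁻¹| * ((j + 1) * c⁻¹ ^ j) :=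
        (Finset.abs_sum_le_sum_abs _ _).trans (Finset.sum_le_sum hterm)
    _ ≤ |x - y| / c ^ 2 * (1 / (1 - c⁻¹) ^ 2) := by
        rw [← Finset.mul_sum]
        gcongr
        exact sum_range_succ_mul_pow_le (by positivity) (inv_lt_one_of_one_lt₀ hc) n
    _ = |x - y| / (c - 1) ^ 2 := by
        field_simp

end piQOnes

section sequences

variable {k : ℕ}

lemma isDigitSeq_seqP : IsDigitSeq (seqP k) := fun j => by unfold seqP; split_ifs <;> simp

lemma isDigitSeq_seqG : IsDigitSeq (seqG k) := fun j => by unfold seqG; split_ifs <;> simp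

lemma isDigitSeq_seqH : IsDigitSeq (seqH k) := fun j => by unfold seqH; split_ifs <;> simp

lemma seqG_add_seqH (j : ℕ) : seqG k j + seqH k j = 1 := by
  unfold seqG seqH; split_ifs <;> norm_num

lemma seqG_of_lt (hk : 3 ≤ k) {j : ℕ} (hj : j < k - 2) : seqG k j = 0 := by
  unfold seqG
  split_ifs with h1 h2
  · rfl
  · rfl
  · simp [show j - (k - 3) = 0 by omega] at h2

lemma seqG_add_sub_two (hk : 3 ≤ k) (j : ℕ) : seqG k (j + (k - 2)) = seqP k j := by
  have hmod : (j + 1) % k = 0 ↔ j % k = k - 1 := by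
    have hr : j % k < k := Nat.mod_lt _ (by omega)
    rw [Nat.add_mod, Nat.mod_eq_of_lt (by omega : 1 < k)]
    rcases Nat.lt_or_ge (j % k + 1) k with h | h
    · rw [Nat.mod_eq_of_lt h]; omega
    · rw [show j % k + 1 = k by omega, Nat.mod_self]; omega
  unfold seqG seqP
  rw [if_neg (by omega), show j + (k - 2) - (k - 3) = j + 1 by omega]
  split_ifs <;> simp_all

lemma seqP_add_self (j : ℕ) : seqP k (j + k) = seqP k j := by
  simp only [seqP, Nat.add_mod_right]

lemma sum_seqP_div (hk : 1 ≤ k) (q : ℝ) :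
    ∑ j ∈ Finset.range k, seqP k j / q ^ (j + 1) = piQOnes q (k - 1) := by
  obtain ⟨n, rfl⟩ : ∃ n, k = n + 1 := ⟨k - 1, by omega⟩
  rw [Finset.sum_range_succ, piQOnes, Nat.add_sub_cancel]
  have hlast : seqP (n + 1) n = 0 := by simp [seqP]
  rw [hlast, zero_div, add_zero]
  refine Finset.sum_congr rfl fun j hj => ?_
  have hj : j < n := Finset.mem_range.1 hj
  simp [seqP, Nat.mod_eq_of_lt (by omega : j < n + 1), hj.ne]

end sequences

section gMap

variable {q : ℝ} {k : ℕ}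

lemma iterate_add_one_div (y : ℝ) (n : ℕ) :
    (fun y => (y + 1) / q)^[n] y = y / q ^ n + piQOnes q n := by
  induction n with
  | zero => simp [piQOnes]
  | succ n ih =>
    rw [Function.iterate_succ_apply', ih, piQOnes_succ, pow_succ, ← div_div]
    ring

lemma gMap_eq (hk : 1 ≤ k) (x : ℝ) : gMap q k x = x / q ^ k + piQOnes q (k - 1) := by
  rw [gMap, iterate_add_one_div, div_div, ← pow_succ', Nat.sub_add_cancel hk]

lemma piQ_seqG (hq : 1 < q) (hk : 3 ≤ k) : piQ q (seqG k) = piQ q (seqP k) / q ^ (k - 2) := by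
  rw [piQ_eq_sum_add_piQ_shift isDigitSeq_seqG hq (k - 2),
    Finset.sum_eq_zero fun j hj => by rw [seqG_of_lt hk (Finset.mem_range.1 hj), zero_div],
    zero_add]
  simp only [seqG_add_sub_two hk]

lemma piQ_seqG_mul_pow (hq : 1 < q) (hk : 3 ≤ k) :
    piQ q (seqG k) * q ^ k = piQ q (seqP k) * q ^ 2 := by
  rw [piQ_seqG hq hk, div_mul_eq_mul_div, div_eq_iff (by positivity), mul_assoc, ← pow_add,
    Nat.add_sub_cancel' (by omega)]

lemma piQ_seqH (hq : 1 < q) : piQ q (seqH k) = 1 / (q - 1) - piQ q (seqG k) := by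
  rw [eq_sub_iff_add_eq', piQ_add isDigitSeq_seqG isDigitSeq_seqH hq]
  simp only [seqG_add_seqH, piQ_one hq]

lemma gMap_piQ_seqP (hq : 1 < q) (hk : 1 ≤ k) : gMap q k (piQ q (seqP k)) = piQ q (seqP k) := by
  have hshift : (fun j => seqP k (j + k)) = seqP k := funext seqP_add_self
  conv_rhs => rw [piQ_eq_sum_add_piQ_shift isDigitSeq_seqP hq k, sum_seqP_div hk, hshift]
  rw [gMap_eq hk, add_comm]

end gMap

section bonacci

variable {k : ℕ} {x : ℝ}

lemma IsBonacci.pow_mul_two_sub (h : IsBonacci k x) : x ^ k * (2 - x) = 1 := by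
  have hgs := geom_sum_mul x k
  rw [← h.2] at hgs
  linear_combination -hgs

lemma IsBonacci.piQOnes_eq_one (h : IsBonacci k x) : piQOnes x k = 1 := by
  have hx : 0 < x := by linarith [h.1.1]
  have hterm : ∀ j ∈ Finset.range k, 1 / x ^ (j + 1) = x ^ (k - 1 - j) / x ^ k := fun j hj => by
    rw [div_eq_div_iff (by positivity) (by positivity), one_mul, ← pow_add]
    have := Finset.mem_range.1 hj
    congr 1
    omega
  rw [piQOnes, Finset.sum_congr rfl hterm, ← Finset.sum_div,
    Finset.sum_range_reflect (fun j => x ^ j) k, ← h.2, div_self (by positivity)]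

lemma IsBonacci.lt_of_four_le (h : IsBonacci k x) (hk : 4 ≤ k) : 48 / 25 < x := by
  obtain ⟨hx1, hx2⟩ := h.1
  by_contra! hx
  have h4 : x ^ 4 * (2 - x) ≤ 1 := by
    rw [← h.pow_mul_two_sub]
    gcongr
    linarith
  -- `x^4 (2 - x) - 1 = (x - 1) (1 + x + x^2 + x^3 - x^4)`
  have hquartic : 0 < 1 + x + x ^ 2 + x ^ 3 - x ^ 4 := by
    nlinarith [mul_le_mul_of_nonneg_left hx (by positivity : (0 : ℝ) ≤ x ^ 3)]
  nlinarith [mul_pos (sub_pos.2 hx1) hquartic]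

end bonacci

section closeness

variable {k n : ℕ} {q qk : ℝ}

lemma IsBonacci.abs_sub_mul_pow_lt (hqk : IsBonacci k qk) (hk : 4 ≤ k)
    (hclose : |q - qk| < (qk ^ (n + (k + 3)))⁻¹) : |q - qk| * qk ^ n < 1 / 96 := by
  have hqk48 := hqk.lt_of_four_le hk
  have h96 : 96 ≤ qk ^ (k + 3) :=
    calc (96 : ℝ) ≤ (48 / 25) ^ 7 := by norm_num
      _ ≤ qk ^ 7 := by gcongr
      _ ≤ qk ^ (k + 3) := pow_le_pow_right₀ (by linarith) (by omega)
  have hprod : |q - qk| * qk ^ n * qk ^ (k + 3) < 1 := by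
    rw [mul_assoc, ← pow_add]
    exact (lt_div_iff₀ (by positivity)).1 (by rwa [one_div])
  rw [lt_div_iff₀ (by norm_num)]
  nlinarith [mul_le_mul_of_nonneg_left h96
    (mul_nonneg (abs_nonneg (q - qk)) (pow_nonneg (by linarith : (0 : ℝ) ≤ qk) n))]

lemma IsBonacci.natCast_mul_abs_sub_le (hqk : IsBonacci k qk) (hk : 4 ≤ k)
    (hclose : |q - qk| < (qk ^ (n + (k + 3)))⁻¹) : n * |q - qk| ≤ 1 / 80 := by
  have hbern : n * (23 / 25) ≤ qk ^ n := by
    have := one_add_mul_sub_le_pow (a := qk) (by linarith [hqk.1.1]) n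
    nlinarith [hqk.lt_of_four_le hk]
  nlinarith [mul_le_mul_of_nonneg_right hbern (abs_nonneg (q - qk)),
    hqk.abs_sub_mul_pow_lt hk hclose]

lemma IsBonacci.abs_sub_mul_pow_le (hqk : IsBonacci k qk) (hk : 4 ≤ k) (hq : 0 ≤ q)
    (hclose : |q - qk| < (qk ^ (n + (k + 3)))⁻¹) : |q - qk| * q ^ n ≤ 1 / 80 := by
  have hcmp := one_sub_mul_mul_pow_le_pow hq hqk.1.1.le n
  nlinarith [hqk.natCast_mul_abs_sub_le hk hclose, hqk.abs_sub_mul_pow_lt hk hclose,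
    mul_le_mul_of_nonneg_left hcmp (abs_nonneg (q - qk)), abs_nonneg (q - qk),
    pow_nonneg hq n]

lemma IsBonacci.abs_one_sub_piQ_seqP_le (hqk : IsBonacci k qk) (hk : 4 ≤ k) (hq : 19 / 10 ≤ q) :
    |1 - piQ q (seqP k)| ≤ 2 * |q - qk| := by
  have hk1 : 1 ≤ k := by omega
  set P := piQ q (seqP k)
  have hqk13 : 13 ≤ q ^ k :=
    calc (13 : ℝ) ≤ (19 / 10) ^ 4 := by norm_num
      _ ≤ q ^ 4 := by gcongr
      _ ≤ q ^ k := pow_le_pow_right₀ (by linarith) hk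
  -- `P = P / q^k + π_q(1^{k-1}0^∞)`, and `π_q(1^k 0^∞) = 1` at `q = q_k`
  have hfactor : (1 - P) * (1 - 1 / q ^ k) = piQOnes qk k - piQOnes q k := by
    have hfix := gMap_piQ_seqP (by linarith : (1 : ℝ) < q) hk1
    rw [gMap_eq hk1] at hfix
    rw [hqk.piQOnes_eq_one, piQOnes_sub_one hk1]
    linear_combination hfix
  have hlip := abs_piQOnes_sub_le (by norm_num : (1 : ℝ) < 19 / 10)
    (by linarith [hqk.lt_of_four_le hk]) hq k (x := qk)
  have hfactor_ge : 12 / 13 ≤ 1 - 1 / q ^ k := by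
    have : 1 / q ^ k ≤ 1 / 13 := one_div_le_one_div_of_le (by norm_num) hqk13
    linarith
  rw [← hfactor, abs_mul, abs_of_pos (a := 1 - 1 / q ^ k) (by linarith), abs_sub_comm qk] at hlip
  have h := (mul_le_mul_of_nonneg_left hfactor_ge (abs_nonneg (1 - P))).trans hlip
  norm_num at h
  linarith [abs_nonneg (q - qk)]

lemma IsBonacci.two_sub_mul_pow_mem_Icc (hqk : IsBonacci k qk) (hq : 1 ≤ q)
    (hkδ : k * |q - qk| ≤ 1 / 80) (hδ : |q - qk| * q ^ k ≤ 1 / 80) :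
    (2 - q) * q ^ k ∈ Icc (39 / 40) (21 / 20) := by
  have hkey := hqk.pow_mul_two_sub
  obtain ⟨hqk1, hqk2⟩ := hqk.1
  have hlo := one_sub_mul_mul_pow_le_pow (by linarith) hq k (a := qk)
  have hhi := one_sub_mul_mul_pow_le_pow (by linarith) hqk1.le k (a := q)
  rw [abs_sub_comm] at hlo
  have hdiff : |(qk - q) * q ^ k| ≤ 1 / 80 := by
    rwa [abs_mul, abs_sub_comm, abs_of_nonneg (by positivity : (0 : ℝ) ≤ q ^ k)]
  have h2qk : 0 < 2 - qk := by linarith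
  constructor <;> nlinarith [abs_le.1 hdiff, mul_le_mul_of_nonneg_left hlo h2qk.le,
    mul_le_mul_of_nonneg_left hhi h2qk.le, pow_pos (by linarith : (0 : ℝ) < q) k]

end closeness

section estimate

variable {m k : ℕ} {q qk : ℝ}

lemma IsBonacci.mem_Icc_of_abs_sub_lt (hqk : IsBonacci k qk) (hk : 4 ≤ k)
    (hclose : |q - qk| < (qk ^ (m * k + k + (k + 3)))⁻¹) : q ∈ Icc (19 / 10) (203 / 100) := by
  have hδ := hqk.abs_sub_mul_pow_lt hk hclose
  have hpow : 1 ≤ qk ^ (m * k + k) := one_le_pow₀ hqk.1.1.le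
  have := hqk.lt_of_four_le hk
  have := hqk.1.2
  constructor <;> nlinarith [abs_nonneg (q - qk), neg_abs_le (q - qk), le_abs_self (q - qk)]

lemma IsBonacci.one_div_sub_one_mul_pow_mem_Icc (hqk : IsBonacci k qk) (hk : 4 ≤ k)
    (hclose : |q - qk| < (qk ^ (m * k + k + (k + 3)))⁻¹) :
    (1 / (q - 1) - 1) * q ^ k ∈ Icc (15 / 16) (7 / 6) := by
  obtain ⟨hq_lo, hq_hi⟩ := hqk.mem_Icc_of_abs_sub_lt hk hclose
  have hδ := hqk.abs_sub_mul_pow_le hk (by linarith) hclose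
  have hkδ : (k : ℝ) * |q - qk| ≤ 1 / 80 :=
    (mul_le_mul_of_nonneg_right (by exact_mod_cast (by omega : k ≤ m * k + k)) (abs_nonneg _)).trans
      (hqk.natCast_mul_abs_sub_le hk hclose)
  have hδk : |q - qk| * q ^ k ≤ 1 / 80 :=
    le_trans (by gcongr; exacts [by linarith, by omega]) hδ
  obtain ⟨h2q_lo, h2q_hi⟩ := hqk.two_sub_mul_pow_mem_Icc (by linarith) hkδ hδk
  rw [div_sub_one (by linarith), div_mul_eq_mul_div, show 1 - (q - 1) = 2 - q by ring]
  constructor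
  · rw [le_div_iff₀ (by linarith)]
    nlinarith
  · rw [div_le_iff₀ (by linarith)]
    nlinarith

/-- With `P = π_q((1^{k-1}0)^∞)` and `s = q^{-mk}`: the interval
`[1 + |1 - P|, 1 - |1 - P| + (1/(q-1) - 1) s]` lies in every `[L_i, R_i]` and in `[L_Q, R_Q]`
(see the lemmas below), and is longer than `D_q / 8`. -/
lemma IsBonacci.bounding_interval_estimates (hqk : IsBonacci k qk) (hk : 4 ≤ k)
    (hclose : |q - qk| < (qk ^ (m * k + k + (k + 3)))⁻¹) :
    1 / (q - 1) - 1 ≤ piQ q (seqG k) ∧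
      2 * |1 - piQ q (seqP k)| + piQ q (seqG k) / q ^ (m * k) / 8 <
        (1 / (q - 1) - 1) / q ^ (m * k) := by
  obtain ⟨hq_lo, hq_hi⟩ := hqk.mem_Icc_of_abs_sub_lt hk hclose
  have hδ := hqk.abs_sub_mul_pow_le hk (by linarith) hclose
  have hu := hqk.abs_one_sub_piQ_seqP_le hk hq_lo
  obtain ⟨hE_lo, hE_hi⟩ := hqk.one_div_sub_one_mul_pow_mem_Icc hk hclose
  have hGX := piQ_seqG_mul_pow (by linarith : 1 < q) (by omega : 3 ≤ k)
  have hX : 1 ≤ q ^ k := one_le_pow₀ (by linarith)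
  have hY : 1 ≤ q ^ (m * k) := one_le_pow₀ (by linarith)
  rw [pow_add] at hδ
  have hδ80 : |q - qk| ≤ 1 / 80 := by
    nlinarith [abs_nonneg (q - qk), one_le_mul_of_one_le_of_one_le hY hX]
  have huYX : 2 * |1 - piQ q (seqP k)| * q ^ (m * k) * q ^ k ≤ 1 / 20 := by
    nlinarith [mul_le_mul_of_nonneg_right hu (by positivity : (0 : ℝ) ≤ q ^ (m * k) * q ^ k)]
  obtain ⟨hP_lo, hP_hi⟩ := abs_le.1 (hu.trans (by linarith) : |1 - piQ q (seqP k)| ≤ 1 / 40)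
  have hEG : 1 / (q - 1) - 1 ≤ piQ q (seqG k) :=
    le_of_mul_le_mul_right (by nlinarith) (by positivity : 0 < q ^ k)
  have hgap : 2 * |1 - piQ q (seqP k)| * q ^ (m * k) + piQ q (seqG k) / 8 < 1 / (q - 1) - 1 :=
    lt_of_mul_lt_mul_right (by nlinarith) (by positivity : 0 ≤ q ^ k)
  refine ⟨hEG, ?_⟩
  rw [lt_div_iff₀ (by positivity)]
  calc (2 * |1 - piQ q (seqP k)| + piQ q (seqG k) / q ^ (m * k) / 8) * q ^ (m * k)
      = 2 * |1 - piQ q (seqP k)| * q ^ (m * k) + piQ q (seqG k) / 8 := by field_simp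
    _ < 1 / (q - 1) - 1 := hgap

end estimate

section endpoints

variable {q : ℝ} {k : ℕ}

lemma iterate_gMap_add (hk : 1 ≤ k) (i : ℕ) (x y : ℝ) :
    (gMap q k)^[i] (x + y) = (gMap q k)^[i] x + y / q ^ (i * k) := by
  induction i with
  | zero => simp
  | succ i ih =>
    rw [Function.iterate_succ_apply', Function.iterate_succ_apply', ih, gMap_eq hk, gMap_eq hk,
      add_mul, one_mul, pow_add, ← div_div]
    ring

lemma abs_iterate_gMap_one_sub_one_le (hq : 1 < q) (hk : 1 ≤ k) (i : ℕ) :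
    |(gMap q k)^[i] 1 - 1| ≤ |1 - piQ q (seqP k)| := by
  set P := piQ q (seqP k)
  have h := iterate_gMap_add (q := q) hk i P (1 - P)
  rw [add_sub_cancel, Function.iterate_fixed (gMap_piQ_seqP hq hk)] at h
  have hρ : 0 < 1 / q ^ (i * k) := by positivity
  have hρ1 : 1 / q ^ (i * k) ≤ 1 := by
    rw [div_le_one (by positivity)]
    exact one_le_pow₀ hq.le
  rw [h, show P + (1 - P) / q ^ (i * k) - 1 = (1 - P) * (1 / q ^ (i * k) - 1) by ring, abs_mul]
  exact mul_le_of_le_one_right (abs_nonneg _) (abs_le.2 ⟨by linarith, by linarith⟩)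

variable {m : ℕ}

lemma Icc_subset_Icc_iterate_gMap (hq : 1 < q) (hk : 1 ≤ k) (i : ℕ) :
    Icc (1 + |1 - piQ q (seqP k)|) (1 - |1 - piQ q (seqP k)| + piQ q (seqG k) / q ^ (m * k)) ⊆
      Icc ((gMap q k)^[i] 1)
        ((gMap q k)^[i] (1 + q ^ (-(((m : ℤ) - (i : ℤ)) * (k : ℤ))) * piQ q (seqG k))) := by
  have hshift : q ^ (-(((m : ℤ) - (i : ℤ)) * (k : ℤ))) * piQ q (seqG k) / q ^ (i * k) =
      piQ q (seqG k) / q ^ (m * k) := by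
    have hzpow : q ^ (-(((m : ℤ) - (i : ℤ)) * (k : ℤ))) = q ^ (i * k) / q ^ (m * k) := by
      rw [← zpow_natCast, ← zpow_natCast, ← zpow_sub₀ (by positivity)]
      congr 1
      push_cast
      ring
    rw [hzpow]
    field_simp
  rw [iterate_gMap_add hk, hshift]
  have h := abs_le.1 (abs_iterate_gMap_one_sub_one_le hq hk i)
  exact Icc_subset_Icc (by linarith) (by linarith)

lemma Icc_subset_Icc_iterate_gMap_piQ_seqH (hq : 1 < q) (hk : 1 ≤ k)
    (hEG : 1 / (q - 1) - 1 ≤ piQ q (seqG k)) :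
    Icc (1 + |1 - piQ q (seqP k)|) (1 - |1 - piQ q (seqP k)| + (1 / (q - 1) - 1) / q ^ (m * k)) ⊆
      Icc ((gMap q k)^[m] (piQ q (seqH k))) ((gMap q k)^[m] (1 / (q - 1))) := by
  have hLQ : (gMap q k)^[m] (piQ q (seqH k)) =
      (gMap q k)^[m] 1 + (1 / (q - 1) - 1 - piQ q (seqG k)) / q ^ (m * k) := by
    rw [← iterate_gMap_add hk, piQ_seqH hq]
    congr 1
    ring
  have hRQ : (gMap q k)^[m] (1 / (q - 1)) = (gMap q k)^[m] 1 + (1 / (q - 1) - 1) / q ^ (m * k) := by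
    rw [← iterate_gMap_add hk, add_sub_cancel]
  rw [hLQ, hRQ]
  have h := abs_le.1 (abs_iterate_gMap_one_sub_one_le hq hk m)
  have hneg : (1 / (q - 1) - 1 - piQ q (seqG k)) / q ^ (m * k) ≤ 0 :=
    div_nonpos_of_nonpos_of_nonneg (by linarith) (by positivity)
  exact Icc_subset_Icc (by linarith) (by linarith)

lemma zpow_mul_piQ_seqP (hq : 1 < q) (hk : 3 ≤ k) :
    q ^ (-(((m : ℤ) + 1) * (k : ℤ)) + 2) * piQ q (seqP k) = piQ q (seqG k) / q ^ (m * k) := by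
  rw [piQ_seqG hq hk, div_div, ← pow_add, div_eq_inv_mul, ← zpow_natCast, ← zpow_neg]
  congr 2
  push_cast [Nat.cast_sub (by omega : 2 ≤ k)]
  ring

end endpoints

theorem bounding_beta_below_general
    (m k : ℕ) (hk : 4 ≤ k) (qk : ℝ) (hqk : IsBonacci k qk)
    (q : ℝ)
    (hclose : |q - qk| < qk ^ (-(((m : ℤ) + 2) * (k : ℤ)) - 3))
    (L R : ℕ → ℝ) (LQ RQ : ℝ) (Bq : Set ℝ) (Dq βq : ℝ)
    (hL : ∀ i, L i = (gMap q k)^[i] 1)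
    (hR : ∀ i, R i =
      (gMap q k)^[i] (1 + q ^ (-(((m : ℤ) - (i : ℤ)) * (k : ℤ))) * piQ q (seqG k)))
    (hLQ : LQ = (gMap q k)^[m] (piQ q (seqH k)))
    (hRQ : RQ = (gMap q k)^[m] (1 / (q - 1)))
    (hB : Bq = (⋂ i ∈ Finset.Icc 0 m, Set.Icc (L i) (R i)) ∩ Set.Icc LQ RQ)
    (hD : Dq = q ^ (-(((m : ℤ) + 1) * (k : ℤ)) + 2) * piQ q (seqP k))
    (hβ : βq = min (1 / 4) ((MeasureTheory.volume Bq).toReal / Dq)) :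
    1 / 8 < βq := by
  have hclose' : |q - qk| < (qk ^ (m * k + k + (k + 3)))⁻¹ := by
    rwa [← zpow_natCast, ← zpow_neg, show -(((m * k + k + (k + 3) : ℕ) : ℤ)) =
      -(((m : ℤ) + 2) * (k : ℤ)) - 3 by push_cast; ring]
  have hq : 1 < q := by linarith [(hqk.mem_Icc_of_abs_sub_lt hk hclose').1]
  have hk1 : 1 ≤ k := by omega
  obtain ⟨hEG, hgap⟩ := hqk.bounding_interval_estimates hk hclose'
  have hEGs : (1 / (q - 1) - 1) / q ^ (m * k) ≤ piQ q (seqG k) / q ^ (m * k) :=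
    div_le_div_of_nonneg_right hEG (by positivity)
  rw [zpow_mul_piQ_seqP hq (by omega)] at hD
  have hsub : Icc (1 + |1 - piQ q (seqP k)|)
      (1 - |1 - piQ q (seqP k)| + (1 / (q - 1) - 1) / q ^ (m * k)) ⊆ Bq := by
    rw [hB]
    refine subset_inter (subset_iInter₂ fun i _ => ?_) ?_
    · rw [hL, hR]
      exact (Icc_subset_Icc_right (by linarith)).trans (Icc_subset_Icc_iterate_gMap hq hk1 i)
    · rw [hLQ, hRQ]
      exact Icc_subset_Icc_iterate_gMap_piQ_seqH hq hk1 hEG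
  have hvol := sub_le_volume_toReal_of_Icc_subset hsub (hB ▸ inter_subset_right)
  rw [hβ]
  refine lt_min (by norm_num) ?_
  rw [lt_div_iff₀ (by linarith [abs_nonneg (1 - piQ q (seqP k))])]
  linarith

theorem bounding_beta_below
    (m k : ℕ) (hm : 1 ≤ m) (hk : 4 ≤ k) (qk : ℝ) (hqk : IsBonacci k qk)
    (q : ℝ) (hq : q ∈ Set.Ioo (1 : ℝ) 2)
    (hclose : |q - qk| < qk ^ (-(((m : ℤ) + 2) * (k : ℤ)) - 3))
    (L R : ℕ → ℝ) (LQ RQ : ℝ) (Bq : Set ℝ) (Dq βq : ℝ)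
    (hL : ∀ i, L i = (gMap q k)^[i] 1)
    (hR : ∀ i, R i =
      (gMap q k)^[i] (1 + q ^ (-(((m : ℤ) - (i : ℤ)) * (k : ℤ))) * piQ q (seqG k)))
    (hLQ : LQ = (gMap q k)^[m] (piQ q (seqH k)))
    (hRQ : RQ = (gMap q k)^[m] (1 / (q - 1)))
    (hB : Bq = (⋂ i ∈ Finset.Icc 0 m, Set.Icc (L i) (R i)) ∩ Set.Icc LQ RQ)
    (hD : Dq = q ^ (-(((m : ℤ) + 1) * (k : ℤ)) + 2) * piQ q (seqP k))
    (hβ : βq = min (1 / 4) ((MeasureTheory.volume Bq).toReal / Dq)) :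
    1 / 8 < βq :=
  bounding_beta_below_general m k hk qk hqk q hclose L R LQ RQ Bq Dq βq hL hR hLQ hRQ hB hD hβ
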